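/- Let R be a commutative ring, A an n×n matrix over R, λ₀ ∈ R, v a right eigenvector and w a left eigenvector of A for λ₀. Then for each j ∈ {1,...,n}, (wᵀv) · det(λ₀ I_{n−1} − M_j) = p_A'(λ₀) · v_j w_j, where M_j is the principal submatrix of A obtained by deleting the j-th row and column. -/

import Mathlib

/-!
Put `B = λ₀ • 1 - A`, so that `Bv = 0`, `wᵀB = 0` and `det(λ₀ I - M_j) = adj(B) j j`.
Since `wᵀB = 0`, multilinearity of the determinant shows that every row of `adj B` is
proportional to `wᵀ`, i.e. `adj(B) i j * w k = adj(B) i k * w j`; summing against `v` gives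
`(wᵀv) adj(B) j j = (adj(B) v)_j w_j`. Since `Av = λ₀ v`, the identity
`adj(X - A) (X - λ₀) v = χ_A(X) v` can be divided by the monic `X - λ₀`, with quotient
`χ_A /ₘ (X - λ₀)`, whose value at `λ₀` is `χ_A'(λ₀)`; evaluating at `λ₀` gives
`adj(B) v = χ_A'(λ₀) v`.
-/

open Matrix Polynomial

namespace Matrix

variable {R : Type*} [CommRing R] {n : Type*} [DecidableEq n] [Fintype n]

theorem det_updateRow_updateRow_swap (M : Matrix n n R) {j k : n} (hjk : j ≠ k)
    (x y : n → R) :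
    ((M.updateRow j x).updateRow k y).det = -((M.updateRow j y).updateRow k x).det := by
  have hswap : ((M.updateRow j y).updateRow k x).submatrix (Equiv.swap j k) id
      = (M.updateRow j x).updateRow k y := by
    ext i c
    rcases eq_or_ne i j with rfl | hij
    · simp [updateRow_ne hjk]
    rcases eq_or_ne i k with rfl | hik
    · simp [updateRow_ne hjk]
    · simp [Equiv.swap_apply_of_ne_of_ne hij hik, updateRow_ne hij, updateRow_ne hik]
  rw [← hswap, det_permute, Equiv.Perm.sign_swap hjk]
  simp

theorem adjugate_apply_mul_comm_of_vecMul_eq_zero {B : Matrix n n R} {w : n → R}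
    (hw : w ᵥ* B = 0) (i j k : n) : adjugate B i j * w k = adjugate B i k * w j := by
  rcases eq_or_ne j k with rfl | hjk
  · rfl
  set e : n → R := Pi.single i 1
  set N := B.updateRow j e with hN
  have hrows : ∑ m, w m • B m = 0 := by
    ext c
    simpa [vecMul, dotProduct] using congrFun hw c
  have hcomb : ∑ m, w m • N m = w j • e + (-w j) • B j := by
    have hterm : ∀ m, w m • N m = w m • B m + (Pi.single j (w j • (e - B j)) : n → n → R) m := by
      intro m
      rcases eq_or_ne m j with rfl | hmj
      · simp [N, smul_sub]
      · simp [N, hmj]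
    simp only [hterm, Finset.sum_add_distrib, hrows, Finset.sum_pi_single', Finset.mem_univ,
      if_true, zero_add]
    module
  -- Replace row `k` of `N` by `∑ m, w m • N m`: the `e` part repeats row `j`, and the `B j` part
  -- is `B.updateRow k e` with rows `j` and `k` swapped.
  have key := det_updateRow_sum N k w
  rw [hcomb, det_updateRow_add, det_updateRow_smul, det_updateRow_smul,
    det_zero_of_row_eq hjk (by simp [N, updateRow_ne hjk]), hN,
    det_updateRow_updateRow_swap B hjk, updateRow_eq_self] at key
  rw [adjugate_apply, adjugate_apply]
  linear_combination -key

theorem dotProduct_mul_adjugate_apply_of_vecMul_eq_zero {B : Matrix n n R} {w : n → R}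
    (hw : w ᵥ* B = 0) (v : n → R) (i j : n) :
    (w ⬝ᵥ v) * adjugate B i j = (adjugate B *ᵥ v) i * w j := by
  simp only [dotProduct, mulVec, Finset.sum_mul]
  refine Finset.sum_congr rfl fun k _ => ?_
  linear_combination v k * adjugate_apply_mul_comm_of_vecMul_eq_zero hw i j k

theorem charmatrix_map_eval (M : Matrix n n R) (t : R) :
    (charmatrix M).map (eval t) = scalar n t - M := by
  ext i j
  rcases eq_or_ne i j with rfl | hij
  · simp [charmatrix_apply_eq]
  · simp [hij]

section Eigenvector

variable {A : Matrix n n R} {t : R} {v : n → R}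

theorem charmatrix_mulVec_of_mulVec_eq_smul (hAv : A *ᵥ v = t • v) :
    charmatrix A *ᵥ (C ∘ v) = (X - C t) • (C ∘ v) := by
  have hCv : A.map C *ᵥ (C ∘ v) = C t • (C ∘ v) := by
    ext i
    rw [← RingHom.map_mulVec, hAv]
    simp
  rw [charmatrix, sub_mulVec, RingHom.mapMatrix_apply, hCv, scalar_apply, diagonal_const_mulVec,
    sub_smul]

theorem charpoly_eval_smul_of_mulVec_eq_smul (hAv : A *ᵥ v = t • v) :
    A.charpoly.eval t • v = 0 := by
  rw [eval_charpoly, ← one_mulVec v, ← smul_mulVec, ← adjugate_mul, ← mulVec_mulVec,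
    sub_mulVec, hAv, scalar_apply, diagonal_const_mulVec, sub_self, mulVec_zero]

theorem adjugate_charmatrix_mulVec_of_mulVec_eq_smul (hAv : A *ᵥ v = t • v) :
    adjugate (charmatrix A) *ᵥ (C ∘ v) = (A.charpoly /ₘ (X - C t)) • (C ∘ v) := by
  have hfactor : (X - C t) • (adjugate (charmatrix A) *ᵥ (C ∘ v)) = A.charpoly • (C ∘ v) := by
    rw [← mulVec_smul, ← charmatrix_mulVec_of_mulVec_eq_smul hAv, mulVec_mulVec, adjugate_mul,
      smul_mulVec, one_mulVec, charpoly]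
  have hdiv : A.charpoly • (C ∘ v) = (X - C t) • (A.charpoly /ₘ (X - C t)) • (C ∘ v) := by
    have hrem : C (A.charpoly.eval t) • (C ∘ v) = 0 := by
      funext i
      have hi := congrArg C (congrFun (charpoly_eval_smul_of_mulVec_eq_smul hAv) i)
      rwa [Pi.smul_apply, smul_eq_mul, C_mul, Pi.zero_apply, C_0] at hi
    conv_lhs => rw [← modByMonic_add_div A.charpoly (X - C t)]
    rw [modByMonic_X_sub_C_eq_C_eval, add_smul, hrem, zero_add, mul_smul]
  funext i
  exact (monic_X_sub_C t).isRegular.left (congrFun (hfactor.trans hdiv) i)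

theorem adjugate_mulVec_of_mulVec_eq_smul (hAv : A *ᵥ v = t • v) :
    adjugate (scalar n t - A) *ᵥ v = (derivative A.charpoly).eval t • v := by
  have hquot : (A.charpoly /ₘ (X - C t)).eval t = (derivative A.charpoly).eval t := by
    simpa using
      congrArg (eval t) (divByMonic_add_X_sub_C_mul_derivative_divByMonic_eq_derivative _ t)
  funext i
  have hi := congrArg (eval t) (congrFun (adjugate_charmatrix_mulVec_of_mulVec_eq_smul hAv) i)
  have hadj : (adjugate (charmatrix A)).map (evalRingHom t) = adjugate (scalar n t - A) := by
    rw [← RingHom.mapMatrix_apply, RingHom.map_adjugate, RingHom.mapMatrix_apply, coe_evalRingHom,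
      charmatrix_map_eval]
  rw [← coe_evalRingHom, RingHom.map_mulVec, hadj] at hi
  simpa [hquot, Function.comp_def] using hi

end Eigenvector

end Matrix

theorem eigenvector_eigenvalue_identity_ring_general
    {R : Type*} [CommRing R] {n : ℕ} (A : Matrix (Fin (n + 1)) (Fin (n + 1)) R)
    (lam0 : R) (v w : Fin (n + 1) → R)
    (hAv : A.mulVec v = lam0 • v) (hwA : A.vecMul w = lam0 • w) :
    ∀ j : Fin (n + 1),
      (w ⬝ᵥ v) *
          (lam0 • (1 : Matrix (Fin n) (Fin n) R) -
            A.submatrix j.succAbove j.succAbove).det =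
        (Polynomial.derivative A.charpoly).eval lam0 * (v j * w j) := by
  intro j
  have hwB : w ᵥ* (scalar _ lam0 - A) = 0 := by
    rw [vecMul_sub, hwA, scalar_apply, vecMul_diagonal_const, op_smul_eq_smul, sub_self]
  have hminor : (lam0 • (1 : Matrix (Fin n) (Fin n) R) - A.submatrix j.succAbove j.succAbove).det
      = adjugate (scalar _ lam0 - A) j j := by
    rw [adjugate_fin_succ_eq_det_submatrix, ← two_mul, pow_mul, neg_one_sq, one_pow, one_mul,
      smul_one_eq_diagonal, scalar_apply, submatrix_sub, Pi.sub_apply, Pi.sub_apply,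
      submatrix_diagonal _ _ Fin.succAbove_right_injective]
    rfl
  rw [hminor, dotProduct_mul_adjugate_apply_of_vecMul_eq_zero hwB,
    adjugate_mulVec_of_mulVec_eq_smul hAv, Pi.smul_apply, smul_eq_mul]
  ring

/-- Eigenvector-eigenvalue identity over a commutative ring: if `v` and `w` are right and
left eigenvectors of `A` for `λ₀`, then for every `j`,
`(wᵀv) · det(λ₀ I_{n−1} − M_j) = p_A'(λ₀) · v_j w_j`, where `M_j` is the principal
submatrix of `A` obtained by deleting the `j`-th row and column. -/
theorem eigenvector_eigenvalue_identity_ring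
    {R : Type*} [CommRing R] {n : ℕ} (A : Matrix (Fin (n + 1)) (Fin (n + 1)) R)
    (lam0 : R) (v w : Fin (n + 1) → R) (hv : v ≠ 0) (hw : w ≠ 0)
    (hAv : A.mulVec v = lam0 • v) (hwA : A.vecMul w = lam0 • w) :
    ∀ j : Fin (n + 1),
      (w ⬝ᵥ v) *
          (lam0 • (1 : Matrix (Fin n) (Fin n) R) -
            A.submatrix j.succAbove j.succAbove).det =
        (Polynomial.derivative A.charpoly).eval lam0 * (v j * w j) :=
  eigenvector_eigenvalue_identity_ring_general A lam0 v w hAv hwA
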